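/- arXiv:2509.24095 — 2 statements merged into one kernel-verified Lean document; each statement's English description precedes it below -/
import Mathlib

section
/- Pure singleton objective (λ = 0), score formula: assume K ≥ 2 and λ = 0. Then the nonconformity score satisfies r(1) = 0 and r(i) = 1/(1 − γ_1) for every i ∈ {2,…,K}; equivalently, r(i) = 1_{i ≥ 2}·(1 − γ_1)^{−1}. -/
open Finset

noncomputable def Gam (γ : ℕ → ℝ) (k : ℕ) : ℝ := ∑ i ∈ Finset.Icc 1 k, γ i

noncomputable def gfun (lam : ℝ) (k : ℕ) : ℝ := (if 1 < k then 1 else 0) + lam * (k : ℝ)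

noncomputable def Psi (γ : ℕ → ℝ) (lam η : ℝ) (k : ℕ) : ℝ := gfun lam k - η * Gam γ k

noncomputable def kappa (γ : ℕ → ℝ) (lam : ℝ) (K : ℕ) (η : ℝ) : ℕ :=
  sInf {k : ℕ | k ≤ K ∧ ∀ j ≤ K, Psi γ lam η k ≤ Psi γ lam η j}

noncomputable def score (γ : ℕ → ℝ) (lam : ℝ) (K : ℕ) (i : ℕ) : ℝ :=
  sInf {η : ℝ | 0 ≤ η ∧ i ≤ kappa γ lam K η}

noncomputable def ell (γ : ℕ → ℝ) (lam η : ℝ) (S : Finset ℕ) : ℝ :=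
  (if 1 < S.card then 1 else 0) + lam * (S.card : ℝ) - η * ∑ i ∈ S, γ i

noncomputable def etaSlope (γ : ℕ → ℝ) (lam : ℝ) (v : ℕ → ℕ) (i : ℕ) : ℝ :=
  (gfun lam (v i) - gfun lam (v (i - 1))) / (Gam γ (v i) - Gam γ (v (i - 1)))

/-!
With `λ = 0` the objective `Ψ_η(k) = 1_{k>1} - η Γ_k` has only three candidate minimizers:
`k = 0` (value `0`), `k = 1` (value `-η γ₁`) and `k = K` (value `1 - η`, the best of all `k ≥ 2`
since `Γ` is strictly increasing). Hence `κ(η)` is `0` at `η = 0`, `1` for `0 < η ≤ 1/(1 - γ₁)`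
and `K` beyond, and the score is the threshold at which `κ` jumps past `i`.
-/

section Gam

variable {γ : ℕ → ℝ} {K : ℕ}

@[simp] lemma Gam_zero : Gam γ 0 = 0 := by simp [Gam]

@[simp] lemma Gam_one : Gam γ 1 = γ 1 := by simp [Gam]

lemma Gam_lt_Gam (hpos : ∀ i, 1 ≤ i → i ≤ K → 0 < γ i) {a b : ℕ} (hab : a < b) (hbK : b ≤ K) :
    Gam γ a < Gam γ b := by
  refine Finset.sum_lt_sum_of_subset (Finset.Icc_subset_Icc_right hab.le)
    (i := b) (by simp; omega) (by simp; omega) (hpos b (by omega) hbK) ?_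
  intro j hj _
  rw [Finset.mem_Icc] at hj
  exact (hpos j hj.1 (hj.2.trans hbK)).le

lemma Gam_le_Gam (hpos : ∀ i, 1 ≤ i → i ≤ K → 0 < γ i) {a b : ℕ} (hab : a ≤ b) (hbK : b ≤ K) :
    Gam γ a ≤ Gam γ b := by
  rcases hab.eq_or_lt with rfl | hlt
  · rfl
  · exact (Gam_lt_Gam hpos hlt hbK).le

end Gam

lemma Psi_lam_zero (γ : ℕ → ℝ) (η : ℝ) (k : ℕ) :
    Psi γ 0 η k = (if 1 < k then 1 else 0) - η * Gam γ k := by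
  simp [Psi, gfun]

lemma kappa_eq_of_lt {γ : ℕ → ℝ} {lam : ℝ} {K : ℕ} {η : ℝ} {k : ℕ} (hk : k ≤ K)
    (hlt : ∀ j < k, Psi γ lam η k < Psi γ lam η j) (hle : ∀ j ≤ K, Psi γ lam η k ≤ Psi γ lam η j) :
    kappa γ lam K η = k := by
  have hmem : k ∈ {k : ℕ | k ≤ K ∧ ∀ j ≤ K, Psi γ lam η k ≤ Psi γ lam η j} := ⟨hk, hle⟩
  refine le_antisymm (Nat.sInf_le hmem) (not_lt.mp fun hκ => ?_)
  obtain ⟨-, hκmin⟩ := Nat.sInf_mem ⟨k, hmem⟩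
  exact (hlt _ hκ).not_ge (hκmin k hk)

section PureSingleton

variable {γ : ℕ → ℝ} {K : ℕ}

lemma kappa_lam_zero_eta_zero : kappa γ 0 K 0 = 0 := by
  refine kappa_eq_of_lt (Nat.zero_le K) (by simp) fun j _ => ?_
  rw [Psi_lam_zero, Psi_lam_zero, if_neg (by omega)]
  split_ifs <;> simp

variable (hpos : ∀ i, 1 ≤ i → i ≤ K → 0 < γ i) (hsum : Gam γ K = 1)
include hpos hsum

lemma gamma_one_lt_one (hK : 2 ≤ K) : γ 1 < 1 := by
  simpa [hsum] using Gam_lt_Gam hpos (by omega : 1 < K) le_rfl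

lemma kappa_lam_zero_eq_one (hK : 1 ≤ K) {η : ℝ} (hη : 0 < η) (hηγ : η * (1 - γ 1) ≤ 1) :
    kappa γ 0 K η = 1 := by
  have hγ1 := hpos 1 le_rfl hK
  refine kappa_eq_of_lt hK (fun j hj => ?_) (fun j hj => ?_)
  · obtain rfl : j = 0 := by omega
    simp [Psi_lam_zero]
    positivity
  · rw [Psi_lam_zero, Psi_lam_zero, if_neg (lt_irrefl 1), Gam_one]
    split_ifs with h
    · have hΓ : Gam γ j ≤ 1 := hsum ▸ Gam_le_Gam hpos hj le_rfl
      nlinarith [Gam_le_Gam hpos h.le hj]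
    · interval_cases j
      · simp
        positivity
      · simp

lemma kappa_lam_zero_eq_K (hK : 2 ≤ K) {η : ℝ} (hηγ : 1 < η * (1 - γ 1)) :
    kappa γ 0 K η = K := by
  have hγ1 := hpos 1 le_rfl (by omega)
  have hγ1' := gamma_one_lt_one hpos hsum hK
  have hη : 1 < η := by nlinarith
  have hlt : ∀ j < K, Psi γ 0 η K < Psi γ 0 η j := by
    intro j hj
    rw [Psi_lam_zero, Psi_lam_zero, hsum, if_pos (by omega)]
    split_ifs with h
    · nlinarith [hsum ▸ Gam_lt_Gam hpos hj le_rfl]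
    · interval_cases j <;> simp <;> nlinarith
  refine kappa_eq_of_lt le_rfl hlt fun j hj => ?_
  rcases hj.eq_or_lt with rfl | hj
  · rfl
  · exact (hlt j hj).le

lemma one_le_kappa_lam_zero_iff (hK : 2 ≤ K) {η : ℝ} (hη : 0 ≤ η) :
    1 ≤ kappa γ 0 K η ↔ 0 < η := by
  rcases hη.eq_or_lt with rfl | hη
  · simp [kappa_lam_zero_eta_zero]
  refine iff_of_true ?_ hη
  rcases le_or_gt (η * (1 - γ 1)) 1 with hηγ | hηγ
  · rw [kappa_lam_zero_eq_one hpos hsum (by omega) hη hηγ]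
  · rw [kappa_lam_zero_eq_K hpos hsum hK hηγ]
    omega

lemma le_kappa_lam_zero_iff {i : ℕ} (hi : 2 ≤ i) (hiK : i ≤ K) {η : ℝ} (hη : 0 ≤ η) :
    i ≤ kappa γ 0 K η ↔ 1 / (1 - γ 1) < η := by
  have hγ1' := gamma_one_lt_one hpos hsum (hi.trans hiK)
  rw [div_lt_iff₀ (by linarith)]
  constructor
  · intro hiκ
    by_contra! hηγ
    rcases hη.eq_or_lt with rfl | hη
    · rw [kappa_lam_zero_eta_zero] at hiκ
      omega
    · rw [kappa_lam_zero_eq_one hpos hsum (by omega) hη (by linarith)] at hiκ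
      omega
  · intro hηγ
    rw [kappa_lam_zero_eq_K hpos hsum (by omega) (by linarith)]
    exact hiK

end PureSingleton

lemma score_eq_of_le_kappa_iff {γ : ℕ → ℝ} {lam : ℝ} {K i : ℕ} {t : ℝ} (ht : 0 ≤ t)
    (h : ∀ η, 0 ≤ η → (i ≤ kappa γ lam K η ↔ t < η)) : score γ lam K i = t := by
  have hset : {η : ℝ | 0 ≤ η ∧ i ≤ kappa γ lam K η} = Set.Ioi t := by
    ext η
    simp only [Set.mem_ofPred_eq, Set.mem_Ioi]
    refine ⟨fun ⟨hη, hi⟩ => (h η hη).mp hi, fun hη => ?_⟩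
    have hη0 : 0 ≤ η := ht.trans hη.le
    exact ⟨hη0, (h η hη0).mpr hη⟩
  rw [score, hset, csInf_Ioi]

/-- Pure singleton objective (λ = 0), score formula: r(1) = 0 and
r(i) = 1/(1 − γ₁) for every i ∈ {2,…,K}. -/
theorem stmt15 (K : ℕ) (hK : 2 ≤ K) (γ : ℕ → ℝ) (lam : ℝ) (hlam : lam = 0)
    (hmono : ∀ i j : ℕ, 1 ≤ i → i ≤ j → j ≤ K → γ j ≤ γ i)
    (hposK : 0 < γ K)
    (hsum : ∑ i ∈ Finset.Icc 1 K, γ i = 1) :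
    score γ lam K 1 = 0 ∧
    (∀ i : ℕ, 2 ≤ i → i ≤ K → score γ lam K i = 1 / (1 - γ 1)) := by
  subst hlam
  have hpos : ∀ i, 1 ≤ i → i ≤ K → 0 < γ i := fun i h1 hK =>
    hposK.trans_le (hmono i K h1 hK le_rfl)
  have hGam : Gam γ K = 1 := hsum
  have hγ1 := gamma_one_lt_one hpos hGam hK
  refine ⟨score_eq_of_le_kappa_iff le_rfl fun η hη => one_le_kappa_lam_zero_iff hpos hGam hK hη,
    fun i hi hiK => ?_⟩
  exact score_eq_of_le_kappa_iff (div_nonneg zero_le_one (by linarith))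
    fun η hη => le_kappa_lam_zero_iff hpos hGam hi hiK hη
end

section
/- Correctness of the SOCOP prediction-set algorithm: under the hull hypotheses, for every real q ≥ 0 the following holds. If q < η_1 then no i ∈ {1,…,K} satisfies r(i) ≤ q. Otherwise, letting j* = max{ j ∈ {1,…,m} : η_j ≤ q }, one has { i ∈ {1,…,K} : r(i) ≤ q } = {1, 2, …, v_{j*}}. -/
/-!
On the hull vertices, `Ψ_η (v l)` changes by `(η_l - η) (Γ_{v l} - Γ_{v (l-1)})` from one vertex
to the next, so it decreases as long as `η_l < η` and increases afterwards, while every point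
strictly between two vertices lies strictly above the chord joining them. Hence
`κ(η) = v_J` with `J = max {l : η_l < η}`. For `v_{j-1} < i ≤ v_j` this gives `i ≤ κ(η) ↔ η_j < η`,
so `r(i) = η_j`, and the theorem follows since `η` is increasing along the hull.
-/

open Finset

lemma Gam_add_one (γ : ℕ → ℝ) (k : ℕ) : Gam γ (k + 1) = Gam γ k + γ (k + 1) :=
  Finset.sum_Icc_succ_top (by omega) γ

lemma Gam_strictMonoOn {γ : ℕ → ℝ} {K : ℕ} (hγ : ∀ k, 1 ≤ k → k ≤ K → 0 < γ k) :
    StrictMonoOn (Gam γ) (Set.Iic K) :=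
  strictMonoOn_of_lt_add_one Set.ordConnected_Iic fun a _ _ ha => by
    rw [Gam_add_one]
    exact lt_add_of_pos_right _ (hγ (a + 1) (by omega) ha)

lemma le_sSup_setOf_iff {p : ℕ → Prop} {m j : ℕ}
    (hp : ∀ a b, 1 ≤ a → a ≤ b → b ≤ m → p b → p a) (hj : 1 ≤ j) (hjm : j ≤ m) :
    j ≤ sSup {l | 1 ≤ l ∧ l ≤ m ∧ p l} ↔ p j := by
  have hbdd : BddAbove {l | 1 ≤ l ∧ l ≤ m ∧ p l} := ⟨m, fun _ hl => hl.2.1⟩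
  refine ⟨fun hle => ?_, fun hpj => le_csSup hbdd ⟨hj, hjm, hpj⟩⟩
  have hne : {l | 1 ≤ l ∧ l ≤ m ∧ p l}.Nonempty := by
    by_contra hempty
    rw [Set.not_nonempty_iff_eq_empty.mp hempty, csSup_empty, bot_eq_zero] at hle
    omega
  obtain ⟨-, hsm, hps⟩ := Nat.sSup_mem hne hbdd
  exact hp j _ hj hle hsm hps

lemma sSup_setOf_le (p : ℕ → Prop) (m : ℕ) : sSup {l | 1 ≤ l ∧ l ≤ m ∧ p l} ≤ m :=
  csSup_le' fun _ hl => hl.2.1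

section Kappa

variable {γ : ℕ → ℝ} {lam η : ℝ} {K : ℕ}

lemma kappa_eq_of_forall {k₀ : ℕ} (hk₀ : k₀ ≤ K)
    (hle : ∀ k ≤ K, Psi γ lam η k₀ ≤ Psi γ lam η k)
    (hlt : ∀ k < k₀, Psi γ lam η k₀ < Psi γ lam η k) : kappa γ lam K η = k₀ := by
  refine le_antisymm (Nat.sInf_le ⟨hk₀, hle⟩) (not_lt.mp fun hsmall => ?_)
  obtain ⟨-, hmin⟩ := Nat.sInf_mem (⟨k₀, hk₀, hle⟩ : {k | k ≤ K ∧ ∀ j ≤ K,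
    Psi γ lam η k ≤ Psi γ lam η j}.Nonempty)
  exact (hlt _ hsmall).not_ge (hmin k₀ hk₀)

lemma score_eq_of_forall_le_kappa_iff {i : ℕ} {η₀ : ℝ} (hη₀ : 0 ≤ η₀)
    (hiff : ∀ η, i ≤ kappa γ lam K η ↔ η₀ < η) : score γ lam K i = η₀ := by
  have hset : {η : ℝ | 0 ≤ η ∧ i ≤ kappa γ lam K η} = Set.Ioi η₀ :=
    Set.ext fun η => ⟨fun hη => (hiff η).mp hη.2, fun hη => ⟨hη₀.trans hη.le, (hiff η).mpr hη⟩⟩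
  rw [score, hset, csInf_Ioi]

end Kappa

/-- `v 0, …, v m` are the vertices of the lower convex hull of the points `(Γ_k, g_k)`, `k ≤ K`. -/
structure IsLowerHull (γ : ℕ → ℝ) (lam : ℝ) (K : ℕ) (v : ℕ → ℕ) (m : ℕ) : Prop where
  zero : v 0 = 0
  last : v m = K
  lt_succ : ∀ i, i < m → v i < v (i + 1)
  slope_lt_succ : ∀ i, 1 ≤ i → i < m → etaSlope γ lam v i < etaSlope γ lam v (i + 1)
  lt_gfun : ∀ i, 1 ≤ i → i ≤ m → ∀ k, v (i - 1) < k → k < v i →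
    gfun lam (v (i - 1)) + etaSlope γ lam v i * (Gam γ k - Gam γ (v (i - 1))) < gfun lam k

namespace IsLowerHull

variable {γ : ℕ → ℝ} {lam η : ℝ} {K : ℕ} {v : ℕ → ℕ} {m : ℕ}

lemma strictMonoOn (h : IsLowerHull γ lam K v m) : StrictMonoOn v (Set.Iic m) :=
  strictMonoOn_of_lt_add_one Set.ordConnected_Iic fun a _ _ ha => h.lt_succ a ha

lemma le_last (h : IsLowerHull γ lam K v m) {j : ℕ} (hj : j ≤ m) : v j ≤ K :=
  h.last ▸ h.strictMonoOn.monotoneOn hj (Set.mem_Iic.mpr le_rfl) hj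

lemma slope_monotoneOn (h : IsLowerHull γ lam K v m) :
    MonotoneOn (etaSlope γ lam v) (Set.Icc 1 m) :=
  (strictMonoOn_of_lt_add_one Set.ordConnected_Icc fun a _ ha hb =>
    h.slope_lt_succ a ha.1 hb.2).monotoneOn

lemma slope_le_slope (h : IsLowerHull γ lam K v m) {a b : ℕ} (ha : 1 ≤ a) (hab : a ≤ b)
    (hbm : b ≤ m) : etaSlope γ lam v a ≤ etaSlope γ lam v b :=
  h.slope_monotoneOn ⟨ha, hab.trans hbm⟩ ⟨ha.trans hab, hbm⟩ hab

lemma exists_mem_segment (h : IsLowerHull γ lam K v m) {i : ℕ} (hi : 1 ≤ i) (hiK : i ≤ K) :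
    ∃ j, 1 ≤ j ∧ j ≤ m ∧ v (j - 1) < i ∧ i ≤ v j := by
  have hex : ∃ l, i ≤ v l := ⟨m, h.last ▸ hiK⟩
  have hj0 : Nat.find hex ≠ 0 := fun h0 => by
    have := Nat.find_spec hex
    rw [h0, h.zero] at this
    omega
  refine ⟨Nat.find hex, by omega, Nat.find_min' hex (h.last ▸ hiK), ?_, Nat.find_spec hex⟩
  exact not_le.mp (Nat.find_min hex (by omega))

lemma le_iff_of_mem_segment (h : IsLowerHull γ lam K v m) {i j J : ℕ} (hjm : j ≤ m)
    (hJm : J ≤ m) (hi₁ : v (j - 1) < i) (hi₂ : i ≤ v j) : i ≤ v J ↔ j ≤ J := by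
  refine ⟨fun hiJ => not_lt.mp fun hJj => ?_, fun hjJ => hi₂.trans (h.strictMonoOn.monotoneOn
    (Set.mem_Iic.mpr hjm) (Set.mem_Iic.mpr hJm) hjJ)⟩
  have := h.strictMonoOn.monotoneOn (Set.mem_Iic.mpr hJm) (Set.mem_Iic.mpr (by omega))
    (show J ≤ j - 1 by omega)
  omega

lemma eq_vertex_or_mem_interior (h : IsLowerHull γ lam K v m) {k : ℕ} (hk : k ≤ K) :
    (∃ j, j ≤ m ∧ v j = k) ∨ ∃ j, 1 ≤ j ∧ j ≤ m ∧ v (j - 1) < k ∧ k < v j := by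
  rcases Nat.eq_zero_or_pos k with rfl | hk0
  · exact .inl ⟨0, Nat.zero_le m, h.zero⟩
  obtain ⟨j, hj, hjm, hk₁, hk₂⟩ := h.exists_mem_segment hk0 hk
  rcases hk₂.lt_or_eq with hk₂ | rfl
  · exact .inr ⟨j, hj, hjm, hk₁, hk₂⟩
  · exact .inl ⟨j, hjm, rfl⟩

lemma Gam_lt (h : IsLowerHull γ lam K v m) (hΓ : StrictMonoOn (Gam γ) (Set.Iic K)) {j : ℕ}
    (hj : 1 ≤ j) (hjm : j ≤ m) : Gam γ (v (j - 1)) < Gam γ (v j) :=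
  hΓ (h.le_last (by omega)) (h.le_last hjm)
    (h.strictMonoOn (Set.mem_Iic.mpr (by omega)) hjm (by omega))

lemma psi_vertex_eq (h : IsLowerHull γ lam K v m) (hΓ : StrictMonoOn (Gam γ) (Set.Iic K))
    (η : ℝ) {j : ℕ} (hj : 1 ≤ j) (hjm : j ≤ m) :
    Psi γ lam η (v j) = Psi γ lam η (v (j - 1)) +
      (etaSlope γ lam v j - η) * (Gam γ (v j) - Gam γ (v (j - 1))) := by
  have hgap := (sub_pos.mpr (h.Gam_lt hΓ hj hjm)).ne'
  rw [Psi, Psi, etaSlope]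
  field_simp
  ring

lemma chord_lt_psi (h : IsLowerHull γ lam K v m) (η : ℝ) {j k : ℕ} (hj : 1 ≤ j) (hjm : j ≤ m)
    (hk₁ : v (j - 1) < k) (hk₂ : k < v j) :
    Psi γ lam η (v (j - 1)) + (etaSlope γ lam v j - η) * (Gam γ k - Gam γ (v (j - 1))) <
      Psi γ lam η k := by
  have := h.lt_gfun j hj hjm k hk₁ hk₂
  rw [Psi, Psi]
  linarith

lemma psi_vertex_strictAntiOn (h : IsLowerHull γ lam K v m)
    (hΓ : StrictMonoOn (Gam γ) (Set.Iic K)) {J : ℕ} (hJm : J ≤ m)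
    (hJ : ∀ l, 1 ≤ l → l ≤ m → (l ≤ J ↔ etaSlope γ lam v l < η)) :
    StrictAntiOn (fun l => Psi γ lam η (v l)) (Set.Iic J) :=
  strictAntiOn_of_add_one_lt Set.ordConnected_Iic fun a _ _ ha => by
    have hstep := h.psi_vertex_eq hΓ η (j := a + 1) (by omega) (ha.trans hJm)
    have hslope := (hJ (a + 1) (by omega) (ha.trans hJm)).mp ha
    have hgap := h.Gam_lt hΓ (j := a + 1) (by omega) (ha.trans hJm)
    simp only [Nat.add_sub_cancel] at hstep hgap ⊢
    nlinarith

lemma psi_vertex_monotoneOn (h : IsLowerHull γ lam K v m)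
    (hΓ : StrictMonoOn (Gam γ) (Set.Iic K)) {J : ℕ}
    (hJ : ∀ l, 1 ≤ l → l ≤ m → (l ≤ J ↔ etaSlope γ lam v l < η)) :
    MonotoneOn (fun l => Psi γ lam η (v l)) (Set.Icc J m) :=
  monotoneOn_of_le_add_one Set.ordConnected_Icc fun a _ ha hb => by
    have hstep := h.psi_vertex_eq hΓ η (j := a + 1) (by omega) hb.2
    have hslope := not_lt.mp (mt (hJ (a + 1) (by omega) hb.2).mpr (by have := ha.1; omega))
    have hgap := h.Gam_lt hΓ (j := a + 1) (by omega) hb.2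
    simp only [Nat.add_sub_cancel] at hstep hgap ⊢
    nlinarith

lemma psi_vertex_le (h : IsLowerHull γ lam K v m) (hΓ : StrictMonoOn (Gam γ) (Set.Iic K))
    {J : ℕ} (hJm : J ≤ m) (hJ : ∀ l, 1 ≤ l → l ≤ m → (l ≤ J ↔ etaSlope γ lam v l < η))
    {j : ℕ} (hjm : j ≤ m) : Psi γ lam η (v J) ≤ Psi γ lam η (v j) := by
  rcases le_total j J with hjJ | hJj
  · exact (h.psi_vertex_strictAntiOn hΓ hJm hJ).antitoneOn hjJ (Set.mem_Iic.mpr le_rfl) hjJ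
  · exact h.psi_vertex_monotoneOn hΓ hJ ⟨le_rfl, hJm⟩ ⟨hJj, hjm⟩ hJj

lemma psi_vertex_lt_of_mem_interior (h : IsLowerHull γ lam K v m)
    (hΓ : StrictMonoOn (Gam γ) (Set.Iic K)) {J : ℕ} (hJm : J ≤ m)
    (hJ : ∀ l, 1 ≤ l → l ≤ m → (l ≤ J ↔ etaSlope γ lam v l < η))
    {j k : ℕ} (hj : 1 ≤ j) (hjm : j ≤ m) (hk₁ : v (j - 1) < k) (hk₂ : k < v j) :
    Psi γ lam η (v J) < Psi γ lam η k := by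
  have hchord := h.chord_lt_psi η hj hjm hk₁ hk₂
  have hΓk₁ : Gam γ (v (j - 1)) < Gam γ k :=
    hΓ (h.le_last (by omega)) ((hk₂.trans_le (h.le_last hjm)).le) hk₁
  have hΓk₂ : Gam γ k < Gam γ (v j) := hΓ ((hk₂.trans_le (h.le_last hjm)).le) (h.le_last hjm) hk₂
  -- `Ψ k` lies strictly above the chord from `v (j - 1)`; if `η_j < η` the chord descends to
  -- `Ψ (v j)`, otherwise it stays above `Ψ (v (j - 1))`.
  rcases lt_or_ge (etaSlope γ lam v j) η with hslope | hslope
  · have hstep := h.psi_vertex_eq hΓ η hj hjm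
    have := h.psi_vertex_le hΓ hJm hJ hjm
    nlinarith
  · have := h.psi_vertex_le hΓ hJm hJ (j := j - 1) (by omega)
    nlinarith

lemma kappa_eq_vertex (h : IsLowerHull γ lam K v m) (hΓ : StrictMonoOn (Gam γ) (Set.Iic K))
    {J : ℕ} (hJm : J ≤ m) (hJ : ∀ l, 1 ≤ l → l ≤ m → (l ≤ J ↔ etaSlope γ lam v l < η)) :
    kappa γ lam K η = v J := by
  have hmin : ∀ k ≤ K, Psi γ lam η (v J) ≤ Psi γ lam η k ∧
      (k < v J → Psi γ lam η (v J) < Psi γ lam η k) := by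
    intro k hk
    rcases h.eq_vertex_or_mem_interior hk with ⟨j, hjm, rfl⟩ | ⟨j, hj, hjm, hk₁, hk₂⟩
    · refine ⟨h.psi_vertex_le hΓ hJm hJ hjm, fun hlt => ?_⟩
      have hjJ : j < J := (h.strictMonoOn.lt_iff_lt hjm hJm).mp hlt
      exact h.psi_vertex_strictAntiOn hΓ hJm hJ hjJ.le (Set.mem_Iic.mpr le_rfl) hjJ
    · have := h.psi_vertex_lt_of_mem_interior hΓ hJm hJ hj hjm hk₁ hk₂
      exact ⟨this.le, fun _ => this⟩
  exact kappa_eq_of_forall (h.le_last hJm) (fun k hk => (hmin k hk).1)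
    (fun k hk => (hmin k (hk.le.trans (h.le_last hJm))).2 hk)

lemma le_kappa_iff (h : IsLowerHull γ lam K v m) (hΓ : StrictMonoOn (Gam γ) (Set.Iic K))
    {i j : ℕ} (hj : 1 ≤ j) (hjm : j ≤ m) (hi₁ : v (j - 1) < i) (hi₂ : i ≤ v j) (η : ℝ) :
    i ≤ kappa γ lam K η ↔ etaSlope γ lam v j < η := by
  have hJ := fun l (hl : 1 ≤ l) (hlm : l ≤ m) =>
    le_sSup_setOf_iff (p := fun l => etaSlope γ lam v l < η) (fun _ _ ha hab hbm hb =>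
      (h.slope_le_slope ha hab hbm).trans_lt hb) hl hlm
  rw [h.kappa_eq_vertex hΓ (sSup_setOf_le _ m) hJ,
    h.le_iff_of_mem_segment hjm (sSup_setOf_le _ m) hi₁ hi₂, hJ j hj hjm]

lemma score_eq (h : IsLowerHull γ lam K v m) (hΓ : StrictMonoOn (Gam γ) (Set.Iic K))
    {i j : ℕ} (hj : 1 ≤ j) (hjm : j ≤ m) (hi₁ : v (j - 1) < i) (hi₂ : i ≤ v j)
    (hslope : 0 ≤ etaSlope γ lam v j) : score γ lam K i = etaSlope γ lam v j :=
  score_eq_of_forall_le_kappa_iff hslope (h.le_kappa_iff hΓ hj hjm hi₁ hi₂)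

end IsLowerHull

theorem stmt19_general (K : ℕ) (γ : ℕ → ℝ) (lam : ℝ)
    (hmono : ∀ i j : ℕ, 1 ≤ i → i ≤ j → j ≤ K → γ j ≤ γ i)
    (hposK : 0 < γ K)
    (v : ℕ → ℕ) (m : ℕ) (hv0 : v 0 = 0) (hvm : v m = K)
    (hvmono : ∀ i, i < m → v i < v (i + 1))
    (heta1 : 0 < etaSlope γ lam v 1)
    (hetamono : ∀ i, 1 ≤ i → i < m → etaSlope γ lam v i < etaSlope γ lam v (i + 1))
    (hhull : ∀ i, 1 ≤ i → i ≤ m → ∀ k, v (i - 1) < k → k < v i →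
      gfun lam (v (i - 1)) + etaSlope γ lam v i * (Gam γ k - Gam γ (v (i - 1))) < gfun lam k)
    (q : ℝ) :
    (q < etaSlope γ lam v 1 → ∀ i : ℕ, 1 ≤ i → i ≤ K → ¬ score γ lam K i ≤ q) ∧
    (etaSlope γ lam v 1 ≤ q → ∀ i : ℕ, 1 ≤ i → i ≤ K →
      (score γ lam K i ≤ q ↔
        i ≤ v (sSup {j : ℕ | 1 ≤ j ∧ j ≤ m ∧ etaSlope γ lam v j ≤ q}))) := by
  have h : IsLowerHull γ lam K v m := ⟨hv0, hvm, hvmono, hetamono, hhull⟩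
  have hΓ : StrictMonoOn (Gam γ) (Set.Iic K) :=
    Gam_strictMonoOn fun k hk hkK => hposK.trans_le (hmono k K hk hkK le_rfl)
  refine ⟨fun hq i hi hiK => ?_, fun _ i hi hiK => ?_⟩
  all_goals
    obtain ⟨j, hj, hjm, hi₁, hi₂⟩ := h.exists_mem_segment hi hiK
    rw [h.score_eq hΓ hj hjm hi₁ hi₂ (heta1.le.trans (h.slope_le_slope le_rfl hj hjm))]
  · exact not_le.mpr (hq.trans_le (h.slope_le_slope le_rfl hj hjm))
  · rw [h.le_iff_of_mem_segment hjm (sSup_setOf_le _ m) hi₁ hi₂, le_sSup_setOf_iff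
      (fun _ _ ha hab hbm hb => (h.slope_le_slope ha hab hbm).trans hb) hj hjm]

/-- Correctness of the SOCOP prediction-set algorithm: under the hull hypotheses, for
q ≥ 0, if q < η₁ then no i ∈ {1,…,K} has r(i) ≤ q; otherwise, with
j* = max{j ∈ {1,…,m} : η_j ≤ q}, one has {i ∈ {1,…,K} : r(i) ≤ q} = {1,…,v_{j*}}. -/
theorem stmt19 (K : ℕ) (hK : 1 ≤ K) (γ : ℕ → ℝ) (lam : ℝ) (hlam : 0 ≤ lam)
    (hmono : ∀ i j : ℕ, 1 ≤ i → i ≤ j → j ≤ K → γ j ≤ γ i)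
    (hposK : 0 < γ K)
    (hsum : ∑ i ∈ Finset.Icc 1 K, γ i = 1)
    (v : ℕ → ℕ) (m : ℕ) (hv0 : v 0 = 0) (hvm : v m = K)
    (hvmono : ∀ i, i < m → v i < v (i + 1))
    (heta1 : 0 < etaSlope γ lam v 1)
    (hetamono : ∀ i, 1 ≤ i → i < m → etaSlope γ lam v i < etaSlope γ lam v (i + 1))
    (hhull : ∀ i, 1 ≤ i → i ≤ m → ∀ k, v (i - 1) < k → k < v i →
      gfun lam (v (i - 1)) + etaSlope γ lam v i * (Gam γ k - Gam γ (v (i - 1))) < gfun lam k)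
    (q : ℝ) (hq : 0 ≤ q) :
    (q < etaSlope γ lam v 1 → ∀ i : ℕ, 1 ≤ i → i ≤ K → ¬ score γ lam K i ≤ q) ∧
    (etaSlope γ lam v 1 ≤ q → ∀ i : ℕ, 1 ≤ i → i ≤ K →
      (score γ lam K i ≤ q ↔
        i ≤ v (sSup {j : ℕ | 1 ≤ j ∧ j ≤ m ∧ etaSlope γ lam v j ≤ q}))) :=
  stmt19_general K γ lam hmono hposK v m hv0 hvm hvmono heta1 hetamono hhull q
end
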